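/- arXiv:2001.09685 — 2 statements merged into one kernel-verified Lean document; each statement's English description precedes it below -/
import Mathlib

section
/- For every integer m ≥ 2, the function f_m(p) = 2(H₂(p) + (1−p)·log₂(m−1))/(p+3) is continuous on [0,1] and attains its maximum R(m) = max_{p∈[0,1]} f_m(p) at a unique point; moreover, for m ≥ 3 this maximizer lies in the open interval (0,1). -/
/-!
Write `f_m = G / (p + 3)` with `G p = 2 (H₂ p + (1 - p) log₂ (m - 1))`, strictly concave on `[0, 1]`
because `H₂` is. If `M` is the maximal value of `f_m`, every maximizer of `f_m` maximizes the strictly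
concave function `G - M (p + 3)`, hence the maximizer is unique. For `m ≥ 3` neither endpoint is a
maximizer: `f_m 1 = 0 < 2 log₂ (m - 1) / 3 = f_m 0`, and `f_m 0 < f_m q` for small `q > 0` since
`H₂` has infinite slope at `0`.
-/

/-- Binary entropy function (base 2), with the convention `0 · log 0 = 0`
(automatic since `Real.logb 2 0 = 0`). -/
noncomputable def H2 (p : ℝ) : ℝ :=
  -p * Real.logb 2 p - (1 - p) * Real.logb 2 (1 - p)

/-- The rate function `f_m(p) = 2 (H₂(p) + (1−p) log₂(m−1))/(p+3)` of the
coding scheme for the Ising channel with alphabet of size `m`. -/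
noncomputable def fm (m : ℕ) (p : ℝ) : ℝ :=
  2 * (H2 p + (1 - p) * Real.logb 2 ((m : ℝ) - 1)) / (p + 3)

open Real Set

lemma IsMaxOn.sub_mul_of_div {E : Type*} {s : Set E} {G D : E → ℝ} {x : E}
    (hD : ∀ z ∈ s, 0 < D z) (hxs : x ∈ s) (hx : IsMaxOn (fun z => G z / D z) s x) :
    IsMaxOn (fun z => G z - G x / D x * D z) s x := by
  intro z hz
  have hratio : G z / D z ≤ G x / D x := hx hz
  rw [div_le_iff₀ (hD z hz)] at hratio
  simp only [mem_ofPred_eq, div_mul_cancel₀ _ (hD x hxs).ne', sub_self]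
  linarith

lemma StrictConcaveOn.eq_of_isMaxOn_div {E : Type*} [AddCommGroup E] [Module ℝ E] {s : Set E}
    {G D : E → ℝ} {x y : E} (hG : StrictConcaveOn ℝ s G) (hD : ConvexOn ℝ s D)
    (hD' : ConcaveOn ℝ s D) (hDpos : ∀ z ∈ s, 0 < D z) (hxs : x ∈ s) (hys : y ∈ s)
    (hx : IsMaxOn (fun z => G z / D z) s x) (hy : IsMaxOn (fun z => G z / D z) s y) :
    x = y := by
  set M := G x / D x
  have hM : G y / D y = M := le_antisymm (hx hys) (hy hxs)
  have hMD : ConvexOn ℝ s fun z => M * D z := by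
    rcases le_total 0 M with hM0 | hM0
    · exact hD.smul hM0
    · exact (hD'.smul (neg_nonneg.2 hM0)).neg.congr fun z _ => by simp
  have hGMD : StrictConcaveOn ℝ s fun z => G z - M * D z := hG.sub_convexOn hMD
  refine hGMD.eq_of_isMaxOn (hx.sub_mul_of_div hDpos hxs) ?_ hxs hys
  simpa only [hM] using hy.sub_mul_of_div hDpos hys

lemma H2_eq_binEntropy_div (p : ℝ) : H2 p = binEntropy p / log 2 := by
  simp only [H2, binEntropy_eq_negMulLog_add_negMulLog_one_sub, negMulLog, logb]
  ring

@[fun_prop]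
lemma continuous_H2 : Continuous H2 := by
  simpa only [← H2_eq_binEntropy_div] using binEntropy_continuous.div_const (log 2)

lemma strictConcaveOn_H2 : StrictConcaveOn ℝ (Icc 0 1) H2 := by
  refine ⟨convex_Icc 0 1, fun x hx y hy hxy a b ha hb hab => ?_⟩
  have h := strictConcave_binEntropy.2 hx hy hxy ha hb hab
  simp only [smul_eq_mul, H2_eq_binEntropy_div] at h ⊢
  rw [← mul_div_assoc, ← mul_div_assoc, ← add_div]
  exact div_lt_div_of_pos_right h (log_pos one_lt_two)

lemma neg_mul_logb_le_H2 {p : ℝ} (hp₀ : 0 ≤ p) (hp₁ : p ≤ 1) : -p * logb 2 p ≤ H2 p := by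
  have : logb 2 (1 - p) ≤ 0 := logb_nonpos one_lt_two (by linarith) (by linarith)
  have : 0 ≤ (1 - p) * -logb 2 (1 - p) := mul_nonneg (by linarith) (by linarith)
  rw [H2]
  linarith

lemma exists_mul_lt_H2 (k : ℝ) : ∃ q ∈ Ioc (0 : ℝ) 1, k * q < H2 q := by
  set q : ℝ := 2 ^ (-(|k| + 1))
  have hq₀ : 0 < q := rpow_pos_of_pos two_pos _
  have hq₁ : q ≤ 1 := rpow_le_one_of_one_le_of_nonpos one_le_two (by linarith [abs_nonneg k])
  refine ⟨q, ⟨hq₀, hq₁⟩, ?_⟩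
  have hlog : -q * logb 2 q = (|k| + 1) * q := by
    rw [logb_rpow two_pos (by norm_num)]
    ring
  have : k * q < (|k| + 1) * q := mul_lt_mul_of_pos_right (by linarith [le_abs_self k]) hq₀
  linarith [neg_mul_logb_le_H2 hq₀.le hq₁]

lemma strictConcaveOn_rate_numerator (c : ℝ) :
    StrictConcaveOn ℝ (Icc 0 1) fun p => 2 * (H2 p + (1 - p) * c) := by
  refine ⟨convex_Icc 0 1, fun x hx y hy hxy a b ha hb hab => ?_⟩
  have h := strictConcaveOn_H2.2 hx hy hxy ha hb hab
  simp only [smul_eq_mul] at h ⊢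
  obtain rfl : b = 1 - a := by linarith
  nlinarith

lemma continuousOn_fm (m : ℕ) : ContinuousOn (fm m) (Icc 0 1) :=
  ContinuousOn.div (by fun_prop) (by fun_prop) fun p hp => by linarith [hp.1]

lemma fm_zero (m : ℕ) : fm m 0 = 2 * logb 2 ((m : ℝ) - 1) / 3 := by
  simp [fm, H2]

lemma fm_one (m : ℕ) : fm m 1 = 0 := by
  simp [fm, H2]

lemma fm_one_lt_fm_zero {m : ℕ} (hm : 3 ≤ m) : fm m 1 < fm m 0 := by
  have hm' : (1 : ℝ) < (m : ℝ) - 1 := by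
    have : (3 : ℝ) ≤ m := by exact_mod_cast hm
    linarith
  rw [fm_one, fm_zero]
  have := logb_pos one_lt_two hm'
  positivity

lemma exists_fm_zero_lt_fm (m : ℕ) : ∃ q ∈ Icc (0 : ℝ) 1, fm m 0 < fm m q := by
  set c := logb 2 ((m : ℝ) - 1)
  obtain ⟨q, hq, hcq⟩ := exists_mul_lt_H2 (4 * c / 3)
  refine ⟨q, Ioc_subset_Icc_self hq, ?_⟩
  rw [fm_zero, fm, div_lt_div_iff₀ (by norm_num) (by linarith [hq.1])]
  linarith

theorem stmt8_general (m : ℕ) :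
    ContinuousOn (fm m) (Set.Icc (0 : ℝ) 1) ∧
    (∃! p, p ∈ Set.Icc (0 : ℝ) 1 ∧ ∀ q ∈ Set.Icc (0 : ℝ) 1, fm m q ≤ fm m p) ∧
    (3 ≤ m → ∀ p,
      (p ∈ Set.Icc (0 : ℝ) 1 ∧ ∀ q ∈ Set.Icc (0 : ℝ) 1, fm m q ≤ fm m p) →
        p ∈ Set.Ioo (0 : ℝ) 1) := by
  have hD : ∀ p ∈ Icc (0 : ℝ) 1, 0 < p + 3 := fun p hp => by linarith [hp.1]
  have hDcvx : ConvexOn ℝ (Icc (0 : ℝ) 1) fun p => p + 3 :=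
    (convexOn_id (convex_Icc 0 1)).add_const 3
  have hDccv : ConcaveOn ℝ (Icc (0 : ℝ) 1) fun p => p + 3 :=
    (concaveOn_id (convex_Icc 0 1)).add_const 3
  refine ⟨continuousOn_fm m, ?_, ?_⟩
  · obtain ⟨p, hp, hpmax⟩ :=
      isCompact_Icc.exists_isMaxOn (nonempty_Icc.2 zero_le_one) (continuousOn_fm m)
    exact ⟨p, ⟨hp, hpmax⟩, fun q ⟨hq, hqmax⟩ =>
      (strictConcaveOn_rate_numerator _).eq_of_isMaxOn_div hDcvx hDccv hD hq hp hqmax hpmax⟩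
  · rintro hm p ⟨hp, hpmax⟩
    obtain ⟨q, hq, hq0⟩ := exists_fm_zero_lt_fm m
    refine ⟨hp.1.lt_of_ne ?_, hp.2.lt_of_ne ?_⟩
    · rintro rfl
      exact (hpmax q hq).not_gt hq0
    · rintro rfl
      exact (hpmax 0 ⟨le_rfl, zero_le_one⟩).not_gt (fm_one_lt_fm_zero hm)

/-- For every `m ≥ 2`, `f_m` is continuous on `[0,1]` and attains its maximum
over `[0,1]` at a unique point; for `m ≥ 3` this maximizer lies in `(0,1)`. -/
theorem stmt8 (m : ℕ) (hm : 2 ≤ m) :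
    ContinuousOn (fm m) (Set.Icc (0 : ℝ) 1) ∧
    (∃! p, p ∈ Set.Icc (0 : ℝ) 1 ∧ ∀ q ∈ Set.Icc (0 : ℝ) 1, fm m q ≤ fm m p) ∧
    (3 ≤ m → ∀ p,
      (p ∈ Set.Icc (0 : ℝ) 1 ∧ ∀ q ∈ Set.Icc (0 : ℝ) 1, fm m q ≤ fm m p) →
        p ∈ Set.Ioo (0 : ℝ) 1) :=
  stmt8_general m
end

section
/- Fix a finite alphabet 𝒳 with |𝒳| ≥ 2, a previous symbol s ∈ 𝒳 (the current channel state, known to both encoder and decoder), a message symbol ν ∈ 𝒳, and noise bits b₁, b₂ ∈ {0,1}. Model each Ising channel use with input x and state σ as producing output y = x if the noise bit is 0 and y = σ if the noise bit is 1, with new state x. Run the paper's transmission rule: if ν = s, transmit ν twice; if ν ≠ s, transmit ν once, and if the resulting output differs from ν, transmit ν a second time. Run the paper's decoding rule: if the first received output differs from s, decode it; otherwise decode the next received output. Then for every choice of b₁, b₂, the decoder outputs exactly ν, and the channel state after the symbol's transmission phase equals ν. -/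
/-- One use of the (noise-bit driven) Ising channel: with input `x`, state `σ`
and noise bit `b`, the output is `x` if `b = false` (i.e. `b = 0`) and `σ` if
`b = true` (i.e. `b = 1`); the new state is the input `x`. -/
def isingOut {𝒳 : Type} (x σ : 𝒳) (b : Bool) : 𝒳 :=
  if b = false then x else σ

/-- The per-symbol transmission rule of the scheme, starting from channel state
`s` with message symbol `ν` and noise bits `b₁, b₂`: if `ν = s` transmit `ν`
twice; if `ν ≠ s` transmit `ν` once and, only if the (feedback) output differs
from `ν`, transmit `ν` a second time. Returns the list of channel outputs
together with the channel state at the end of the phase (each use updates the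
state to its input). -/
def transmitSym {𝒳 : Type} [DecidableEq 𝒳] (s ν : 𝒳) (b₁ b₂ : Bool) :
    List 𝒳 × 𝒳 :=
  if ν = s then
    ([isingOut ν s b₁, isingOut ν ν b₂], ν)
  else if isingOut ν s b₁ = ν then
    ([isingOut ν s b₁], ν)
  else
    ([isingOut ν s b₁, isingOut ν ν b₂], ν)

/-- The per-symbol decoding rule: if the first received output differs from the
previously decoded symbol `s`, decode it; otherwise decode the next output. -/
def decodeSym {𝒳 : Type} [DecidableEq 𝒳] (s : 𝒳) (ys : List 𝒳) : 𝒳 :=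
  match ys with
  | [] => s
  | y :: rest => if y ≠ s then y else rest.headD s

/-!
Each channel use outputs either its input or its state. When `ν ≠ s`, the first output is
therefore `ν` or `s`, and the decoder (comparing with `s`) and the encoder (through feedback)
both know which. A second use, if any, has state `ν` and input `ν`, so its output is `ν`
whatever the noise.
-/

@[simp]
theorem isingOut_self {𝒳 : Type} (x : 𝒳) (b : Bool) : isingOut x x b = x := by
  cases b <;> rfl

theorem isingOut_eq_or {𝒳 : Type} (x σ : 𝒳) (b : Bool) :
    isingOut x σ b = x ∨ isingOut x σ b = σ := by
  cases b
  · exact Or.inl rfl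
  · exact Or.inr rfl

section

variable {𝒳 : Type} [DecidableEq 𝒳]

theorem decodeSym_cons_of_ne {s y : 𝒳} (hy : y ≠ s) (rest : List 𝒳) :
    decodeSym s (y :: rest) = y :=
  if_pos hy

theorem decodeSym_self_cons (s y : 𝒳) (rest : List 𝒳) : decodeSym s (s :: y :: rest) = y := by
  simp [decodeSym]

theorem transmitSym_snd (s ν : 𝒳) (b₁ b₂ : Bool) : (transmitSym s ν b₁ b₂).2 = ν := by
  unfold transmitSym
  split_ifs <;> rfl

theorem decodeSym_transmitSym_fst (s ν : 𝒳) (b₁ b₂ : Bool) :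
    decodeSym s (transmitSym s ν b₁ b₂).1 = ν := by
  unfold transmitSym
  split_ifs with hνs hfirst
  · subst hνs
    simpa only [isingOut_self] using decodeSym_self_cons ν ν []
  · rw [hfirst]
    exact decodeSym_cons_of_ne hνs []
  · have hstate : isingOut ν s b₁ = s := (isingOut_eq_or ν s b₁).resolve_left hfirst
    rw [hstate, isingOut_self]
    exact decodeSym_self_cons s ν []

end

theorem stmt10_general (𝒳 : Type) [DecidableEq 𝒳] (s ν : 𝒳) (b₁ b₂ : Bool) :
    decodeSym s (transmitSym s ν b₁ b₂).1 = ν ∧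
    (transmitSym s ν b₁ b₂).2 = ν :=
  ⟨decodeSym_transmitSym_fst s ν b₁ b₂, transmitSym_snd s ν b₁ b₂⟩

/-- For every previous state `s`, message symbol `ν` and noise bits `b₁, b₂`,
the decoder outputs exactly `ν`, and the channel state after the symbol's
transmission phase equals `ν`. -/
theorem stmt10 (𝒳 : Type) [DecidableEq 𝒳] [Fintype 𝒳]
    (hcard : 2 ≤ Fintype.card 𝒳) (s ν : 𝒳) (b₁ b₂ : Bool) :
    decodeSym s (transmitSym s ν b₁ b₂).1 = ν ∧
    (transmitSym s ν b₁ b₂).2 = ν :=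
  stmt10_general 𝒳 s ν b₁ b₂
end
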